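/- Let N be a set of agents, X a set of outcomes, and for each agent i let Θ_i be a set of types with payoff function π_i : X → Θ_i → ℝ (π_i(x | θ_i) is i's payoff from outcome x when i's type is θ_i). Let f : (Π_i Θ_i) → X be a social choice function, let δ = (δ_i : Θ_i → Θ_i)_{i∈N} be an ex post equilibrium of the direct revelation mechanism (Θ, f), and let g := f ∘ δ (i.e., g(θ) = f(δ_1(θ_1),…,δ_n(θ_n))). Let (M, φ) be a mechanism with M = Π_i M_i and φ : M → X, and let σ = (σ_i : Θ_i → M_i)_{i∈N} be an ex post equilibrium of (M, φ) such that φ(σ(θ)) = f(θ) for every type profile θ. Then the strategy profile σ∘δ defined by (σ∘δ)_i(θ_i) = σ_i(δ_i(θ_i)) is an ex post equilibrium of (M, φ), and φ((σ∘δ)(θ)) = g(θ) for every type profile θ. -/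
import Mathlib


/-- Repullo's proposition: if `δ` is an ex post equilibrium of the direct revelation
mechanism `(Θ, f)` and `σ` is an ex post equilibrium of a mechanism `(M, φ)` whose
outcome coincides with `f`, then `σ ∘ δ` is an ex post equilibrium of `(M, φ)` whose
outcome scf is `g = f ∘ δ`. -/
theorem repullo
    {N : Type*} [DecidableEq N] {X : Type*}
    {Θ : N → Type*} {M : N → Type*}
    (π : (i : N) → X → Θ i → ℝ)
    (f : ((i : N) → Θ i) → X)
    (δ : (i : N) → Θ i → Θ i)
    -- δ is an ex post equilibrium of the direct revelation mechanism (Θ, f)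
    (hδ : ∀ (θ : (i : N) → Θ i) (i : N) (m : Θ i),
      π i (f (fun j => δ j (θ j))) (θ i) ≥
        π i (f (Function.update (fun j => δ j (θ j)) i m)) (θ i))
    (φ : ((i : N) → M i) → X)
    (σ : (i : N) → Θ i → M i)
    -- σ is an ex post equilibrium of (M, φ)
    (hσ : ∀ (θ : (i : N) → Θ i) (i : N) (m : M i),
      π i (φ (fun j => σ j (θ j))) (θ i) ≥
        π i (φ (Function.update (fun j => σ j (θ j)) i m)) (θ i))
    -- the equilibrium σ implements f
    (hout : ∀ θ : (i : N) → Θ i, φ (fun j => σ j (θ j)) = f θ) :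
    -- σ ∘ δ is an ex post equilibrium of (M, φ) ...
    (∀ (θ : (i : N) → Θ i) (i : N) (m : M i),
      π i (φ (fun j => σ j (δ j (θ j)))) (θ i) ≥
        π i (φ (Function.update (fun j => σ j (δ j (θ j))) i m)) (θ i)) ∧
    -- ... whose outcome scf coincides with g = f ∘ δ
    (∀ θ : (i : N) → Θ i, φ (fun j => σ j (δ j (θ j))) = f (fun j => δ j (θ j))) := by
  constructor
  · intro θ i m
    set θ' : (j : N) → Θ j := fun j => δ j (θ j) with hθ'
    set ρ : (j : N) → Θ j := Function.update θ' i (θ i) with hρ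
    have hcomp : (fun j => σ j (ρ j)) =
        Function.update (fun j => σ j (θ' j)) i (σ i (θ i)) := by
      funext j
      by_cases hj : j = i
      · subst hj; simp [hρ]
      · simp [hρ, Function.update_of_ne hj]
    have hcomp2 : Function.update (fun j => σ j (ρ j)) i m =
        Function.update (fun j => σ j (θ' j)) i m := by
      rw [hcomp, Function.update_idem]
    have h1 : π i (φ (fun j => σ j (ρ j))) (θ i) ≥
        π i (φ (Function.update (fun j => σ j (θ' j)) i m)) (θ i) := by
      have := hσ ρ i m
      rw [hcomp2] at this
      simpa [hρ] using this
    have h2 : φ (fun j => σ j (ρ j)) = f ρ := hout ρ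
    have h3 : π i (f θ') (θ i) ≥ π i (f ρ) (θ i) := by
      have := hδ θ i (θ i)
      simpa [hρ, hθ'] using this
    have h4 : φ (fun j => σ j (θ' j)) = f θ' := hout θ'
    calc π i (φ (fun j => σ j (δ j (θ j)))) (θ i)
        = π i (f θ') (θ i) := by rw [show (fun j => σ j (δ j (θ j))) = fun j => σ j (θ' j) from rfl, h4]
      _ ≥ π i (f ρ) (θ i) := h3
      _ = π i (φ (fun j => σ j (ρ j))) (θ i) := by rw [h2]
      _ ≥ π i (φ (Function.update (fun j => σ j (θ' j)) i m)) (θ i) := h1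
  · intro θ
    exact hout (fun j => δ j (θ j))
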